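/- arXiv:2211.03743 — 7 statements merged into one kernel-verified Lean document; each statement's English description precedes it below -/
import Mathlib

section
/- For every integer h ≥ 3, the polynomial p_h(t) = t^{4h} − t^{4h−1} + t^{2h} − t + 1 in ℤ[t] is not a product of cyclotomic polynomials; that is, there is no finite multiset S of positive integers such that p_h = ∏_{n ∈ S} Φ_n. -/
/-!
If `p_h` were a product of cyclotomic polynomials, its `4h` roots would lie on the unit circle,
so every power sum `s_k = ∑ z^k` of the roots would satisfy `‖s_k‖ ≤ 4h`. As `p_h` is
self-reciprocal, `p_h(t) = ∏ (1 - z t)`, and Newton's identities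
`∑_{j ≤ n} a_j s_{n-j} = (4h - n) a_n`, with `a_j` the coefficients of `p_h`, compute the power
sums from its five nonzero coefficients: `s_n = 1` for `0 < n < 2h`, `s_{2h+j} = 1 - 2h - j`
for `j ≤ 2h - 2`, and then `s_{4h+3} = 4h + 4`.
-/

section PowerSums

variable {R : Type*} [CommRing R]

def powerSum (s : Multiset R) (k : ℕ) : R := (s.map (· ^ k)).sum

theorem powerSum_zero (s : Multiset R) : powerSum s 0 = s.card := by
  simp [powerSum]

open PowerSeries

theorem one_sub_C_mul_X_mul_mk_pow (z : R) : (1 - C z * X) * mk (z ^ ·) = 1 := by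
  simpa [rescale_mk, rescale_X, mul_comm] using congrArg (rescale z) (mk_one_mul_one_sub_eq_one R)

/-- Newton's identities: `∑ s_k X^k = ∑_z 1 / (1 - z X) = d - X P' / P` for `P = ∏ (1 - z X)`
of degree at most `d = card s`. -/
theorem prod_one_sub_C_mul_X_mul_mk_powerSum (s : Multiset R) :
    (s.map fun z => 1 - C z * X).prod * mk (powerSum s) =
      (s.card : R⟦X⟧) * (s.map fun z => 1 - C z * X).prod -
        X * d⁄dX R (s.map fun z => 1 - C z * X).prod := by
  induction s using Multiset.induction with
  | empty => ext; simp [powerSum]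
  | cons z s ih =>
    have hmk : mk (powerSum (z ::ₘ s)) = mk (z ^ ·) + mk (powerSum s) := by
      ext n; simp [powerSum]
    have hz := one_sub_C_mul_X_mul_mk_pow z
    simp only [Multiset.map_cons, Multiset.prod_cons, Multiset.card_cons, Derivation.leibniz,
      hmk, Nat.cast_succ, map_sub, derivative_X, Derivation.map_one_eq_zero, smul_eq_mul,
      derivative_C] at ih ⊢
    linear_combination (s.map fun z => 1 - C z * X).prod * hz + (1 - C z * X) * ih

end PowerSums

open Polynomial

theorem coeff_prod_one_sub_C_mul_X_mul_mk_powerSum {R : Type*} [CommRing R] (s : Multiset R)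
    (n : ℕ) :
    PowerSeries.coeff n
        (((s.map fun z => 1 - C z * X).prod : R[X]) * PowerSeries.mk (powerSum s) : PowerSeries R) =
      ((s.card : R) - n) * (s.map fun z => 1 - C z * X).prod.coeff n := by
  have hcoe : (((s.map fun z => 1 - C z * X).prod : R[X]) : PowerSeries R) =
      (s.map fun z => 1 - PowerSeries.C z * PowerSeries.X).prod := by
    rw [← coeToPowerSeries.ringHom_apply, map_multiset_prod, Multiset.map_map]
    simp [Function.comp_def]
  rw [hcoe, prod_one_sub_C_mul_X_mul_mk_powerSum, ← hcoe, PowerSeries.derivative_coe,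
    ← map_natCast PowerSeries.C, map_sub, PowerSeries.coeff_C_mul, Polynomial.coeff_coe]
  cases n with
  | zero => simp
  | succ n =>
    rw [PowerSeries.coeff_succ_X_mul, Polynomial.coeff_coe, coeff_derivative]
    push_cast
    ring

noncomputable def pentanomial (R : Type*) [Ring R] (h : ℕ) : R[X] :=
  X ^ (4 * h) - X ^ (4 * h - 1) + X ^ (2 * h) - X + 1

section Pentanomial

variable {R : Type*} [Ring R] {h : ℕ}

theorem coeff_pentanomial (hh : 1 ≤ h) (k : ℕ) :
    (pentanomial R h).coeff k =
      if k = 0 ∨ k = 2 * h ∨ k = 4 * h then 1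
      else if k = 1 ∨ k = 4 * h - 1 then -1 else 0 := by
  simp only [pentanomial, coeff_add, coeff_sub, coeff_one, coeff_X, coeff_X_pow]
  split_ifs <;> first | omega | simp

theorem natDegree_pentanomial [Nontrivial R] (hh : 1 ≤ h) :
    (pentanomial R h).natDegree = 4 * h := by
  refine natDegree_eq_of_le_of_coeff_ne_zero ?_ (by simp [coeff_pentanomial hh])
  rw [natDegree_le_iff_coeff_eq_zero]
  intro k hk
  rw [coeff_pentanomial hh, if_neg (by omega), if_neg (by omega)]

theorem monic_pentanomial [Nontrivial R] (hh : 1 ≤ h) : (pentanomial R h).Monic := by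
  simp [Monic, leadingCoeff, natDegree_pentanomial hh, coeff_pentanomial hh]

theorem reverse_pentanomial [Nontrivial R] (hh : 1 ≤ h) :
    (pentanomial R h).reverse = pentanomial R h := by
  ext k
  rw [coeff_reverse, natDegree_pentanomial hh]
  rcases le_or_gt k (4 * h) with hk | hk
  · rw [revAt_le hk, coeff_pentanomial hh, coeff_pentanomial hh]
    split_ifs <;> first | omega | rfl
  · rw [revAt_eq_self_of_lt hk]

theorem map_pentanomial {S : Type*} [Ring S] (f : R →+* S) :
    (pentanomial R h).map f = pentanomial S h := by
  simp [pentanomial]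

end Pentanomial

theorem powerSum_newton_of_pentanomial {K : Type*} [CommRing K] {h : ℕ} {s : Multiset K}
    (hs : (s.map fun z => 1 - C z * X).prod = pentanomial K h) (hcard : s.card = 4 * h) (n : ℕ) :
    powerSum s n - (if 1 ≤ n then powerSum s (n - 1) else 0)
      + (if 2 * h ≤ n then powerSum s (n - 2 * h) else 0)
      - (if 4 * h - 1 ≤ n then powerSum s (n - (4 * h - 1)) else 0)
      + (if 4 * h ≤ n then powerSum s (n - 4 * h) else 0)
      = (4 * h - n : K) * (pentanomial K h).coeff n := by
  have e := coeff_prod_one_sub_C_mul_X_mul_mk_powerSum s n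
  have hcoe : ((pentanomial K h : K[X]) : PowerSeries K) = 1 - PowerSeries.X ^ 1 +
      PowerSeries.X ^ (2 * h) - PowerSeries.X ^ (4 * h - 1) + PowerSeries.X ^ (4 * h) := by
    simp [pentanomial]; ring
  rw [hs, hcard, hcoe] at e
  simp only [add_mul, sub_mul, one_mul, map_add, map_sub, PowerSeries.coeff_X_pow_mul',
    PowerSeries.coeff_mk, Nat.cast_mul, Nat.cast_ofNat] at e
  rw [sub_mul]
  exact e

section

variable {K : Type*} [CommRing K] {h : ℕ} {s : Multiset K}

theorem powerSum_eq_one_of_pentanomial (hh : 1 ≤ h)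
    (hs : (s.map fun z => 1 - C z * X).prod = pentanomial K h) (hcard : s.card = 4 * h)
    {n : ℕ} (hn0 : 0 < n) (hn : n < 2 * h) : powerSum s n = 1 := by
  induction n with
  | zero => omega
  | succ m ih =>
    have e := powerSum_newton_of_pentanomial hs hcard (m + 1)
    rw [coeff_pentanomial hh] at e
    rcases Nat.eq_zero_or_pos m with rfl | hm
    · simp (disch := omega) only [if_pos, if_neg, true_or, if_true] at e
      rw [powerSum_zero, hcard] at e
      push_cast at e
      linear_combination e
    · simp (disch := omega) only [if_pos, if_neg, Nat.add_sub_cancel, ih hm (by omega)] at e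
      linear_combination e

theorem powerSum_two_mul_add_of_pentanomial (hh : 1 ≤ h)
    (hs : (s.map fun z => 1 - C z * X).prod = pentanomial K h) (hcard : s.card = 4 * h)
    {j : ℕ} (hj : j ≤ 2 * h - 2) : powerSum s (2 * h + j) = 1 - 2 * h - j := by
  induction j with
  | zero =>
    have e := powerSum_newton_of_pentanomial hs hcard (2 * h)
    rw [coeff_pentanomial hh] at e
    simp (disch := omega) only [if_pos, if_neg, true_or, or_true, if_true, Nat.sub_self,
      powerSum_zero, hcard,
      powerSum_eq_one_of_pentanomial hh hs hcard (n := 2 * h - 1) (by omega) (by omega)] at e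
    push_cast at e ⊢
    linear_combination e
  | succ j ih =>
    have e := powerSum_newton_of_pentanomial hs hcard (2 * h + (j + 1))
    rw [coeff_pentanomial hh] at e
    simp (disch := omega) only [if_pos, if_neg] at e
    rw [show 2 * h + (j + 1) - 1 = 2 * h + j by omega,
      show 2 * h + (j + 1) - 2 * h = j + 1 by omega, ih (by omega),
      powerSum_eq_one_of_pentanomial hh hs hcard (n := j + 1) (by omega) (by omega)] at e
    push_cast at e ⊢
    linear_combination e

theorem powerSum_linear_recurrence_of_pentanomial (hh : 1 ≤ h)
    (hs : (s.map fun z => 1 - C z * X).prod = pentanomial K h) (hcard : s.card = 4 * h) (m : ℕ) :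
    powerSum s (4 * h + m + 1) - powerSum s (4 * h + m) + powerSum s (2 * h + m + 1)
      - powerSum s (m + 2) + powerSum s (m + 1) = 0 := by
  have e := powerSum_newton_of_pentanomial hs hcard (4 * h + m + 1)
  rw [coeff_pentanomial hh] at e
  simp (disch := omega) only [if_pos, if_neg, mul_zero] at e
  rwa [show 4 * h + m + 1 - 1 = 4 * h + m by omega,
    show 4 * h + m + 1 - 2 * h = 2 * h + m + 1 by omega,
    show 4 * h + m + 1 - (4 * h - 1) = m + 2 by omega,
    show 4 * h + m + 1 - 4 * h = m + 1 by omega] at e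

theorem powerSum_four_mul_add_three_of_pentanomial (hh : 3 ≤ h)
    (hs : (s.map fun z => 1 - C z * X).prod = pentanomial K h) (hcard : s.card = 4 * h) :
    powerSum s (4 * h + 3) = 4 * h + 4 := by
  have one {n : ℕ} (hn0 : 0 < n) (hn : n < 2 * h) : powerSum s n = 1 :=
    powerSum_eq_one_of_pentanomial (by omega) hs hcard hn0 hn
  have two {j : ℕ} (hj : j ≤ 2 * h - 2) : powerSum s (2 * h + j) = 1 - 2 * h - j :=
    powerSum_two_mul_add_of_pentanomial (by omega) hs hcard hj
  have h4m1 : powerSum s (4 * h - 1) = 1 := by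
    have e := powerSum_newton_of_pentanomial hs hcard (4 * h - 1)
    rw [coeff_pentanomial (by omega)] at e
    simp (disch := omega) only [if_pos, if_neg, or_true, if_true, Nat.sub_self, powerSum_zero] at e
    rw [show 4 * h - 1 - 1 = 2 * h + (2 * h - 2) by omega,
      show 4 * h - 1 - 2 * h = 2 * h - 1 by omega, two le_rfl,
      one (n := 2 * h - 1) (by omega) (by omega), hcard] at e
    push_cast [Nat.cast_sub (by omega : 1 ≤ 4 * h), Nat.cast_sub (by omega : 2 ≤ 2 * h)] at e
    linear_combination e
  have h4 : powerSum s (4 * h) = 1 - 2 * h := by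
    have e := powerSum_newton_of_pentanomial hs hcard (4 * h)
    simp (disch := omega) only [if_pos, Nat.sub_self] at e
    rw [show 4 * h - 2 * h = 2 * h + 0 by omega, show 4 * h - (4 * h - 1) = 1 by omega, h4m1,
      two (by omega), one (n := 1) (by omega) (by omega), powerSum_zero, hcard] at e
    push_cast at e
    linear_combination e
  have r1 : powerSum s (4 * h + 1) - powerSum s (4 * h) + powerSum s (2 * h + 1)
      - powerSum s 2 + powerSum s 1 = 0 :=
    powerSum_linear_recurrence_of_pentanomial (by omega) hs hcard 0
  have r2 : powerSum s (4 * h + 2) - powerSum s (4 * h + 1) + powerSum s (2 * h + 2)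
      - powerSum s 3 + powerSum s 2 = 0 :=
    powerSum_linear_recurrence_of_pentanomial (by omega) hs hcard 1
  have r3 : powerSum s (4 * h + 3) - powerSum s (4 * h + 2) + powerSum s (2 * h + 3)
      - powerSum s 4 + powerSum s 3 = 0 :=
    powerSum_linear_recurrence_of_pentanomial (by omega) hs hcard 2
  push_cast [two (j := 1) (by omega), two (j := 2) (by omega), two (j := 3) (by omega)] at r1 r2 r3
  linear_combination r1 + r2 + r3 + h4 + one (n := 4) (by omega) (by omega)
    - one (n := 1) (by omega) (by omega)

end

theorem reverse_one {R : Type*} [Semiring R] : (1 : R[X]).reverse = 1 := by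
  simpa using reverse_C (1 : R)

theorem reverse_X_sub_C {R : Type*} [CommRing R] [Nontrivial R] (z : R) :
    (X - C z).reverse = 1 - C z * X := by
  have hX : (X : R[X]).reverse = 1 := by
    simpa using (reverse_mul_X (1 : R[X])).trans reverse_one
  rw [sub_eq_add_neg, ← C_neg, reverse_add_C, hX, natDegree_X, C_neg]
  ring

theorem reverse_multiset_prod_X_sub_C {R : Type*} [CommRing R] [IsDomain R] (s : Multiset R) :
    (s.map fun z => X - C z).prod.reverse = (s.map fun z => 1 - C z * X).prod := by
  induction s using Multiset.induction with
  | empty => simp [reverse_one]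
  | cons z s ih => simp [reverse_mul_of_domain, ih, reverse_X_sub_C]

theorem norm_powerSum_le_card {R : Type*} [NormedCommRing R] [NormOneClass R] {s : Multiset R}
    (hs : ∀ z ∈ s, ‖z‖ ≤ 1) (k : ℕ) : ‖powerSum s k‖ ≤ s.card := by
  refine (norm_multiset_sum_le _).trans ?_
  rw [Multiset.map_map]
  refine (Multiset.sum_map_le_sum_map _ (fun _ => 1) fun z hz => ?_).trans (by simp)
  exact (norm_pow_le _ k).trans (pow_le_one₀ (norm_nonneg z) (hs z hz))

theorem norm_eq_one_of_isRoot_prod_cyclotomic {S : Multiset ℕ} (hS : ∀ n ∈ S, 0 < n) {z : ℂ}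
    (hz : ((S.map fun n => cyclotomic n ℂ).prod).IsRoot z) : ‖z‖ = 1 := by
  rw [IsRoot, eval_multiset_prod, Multiset.prod_eq_zero_iff, Multiset.map_map] at hz
  obtain ⟨n, hn, hzn⟩ := Multiset.mem_map.1 hz
  have : NeZero n := ⟨(hS n hn).ne'⟩
  exact ((isRoot_cyclotomic_iff (R := ℂ)).1 hzn).norm'_eq_one this.out

theorem stmt_0 (h : ℕ) (hh : 3 ≤ h) :
    ¬ ∃ S : Multiset ℕ, (∀ n ∈ S, 0 < n) ∧
      ((X : ℤ[X]) ^ (4 * h) - X ^ (4 * h - 1) + X ^ (2 * h) - X + 1 =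
        (S.map (fun n => cyclotomic n ℤ)).prod) := by
  rintro ⟨S, hS, hp⟩
  have hcyc : pentanomial ℂ h = (S.map fun n => cyclotomic n ℂ).prod := by
    rw [← map_pentanomial (Int.castRingHom ℂ), pentanomial, hp, Polynomial.map_multiset_prod,
      Multiset.map_map]
    simp
  set s := (pentanomial ℂ h).roots
  have hmonic := monic_pentanomial (R := ℂ) (by omega : 1 ≤ h)
  have hsplit : (s.map fun z => X - C z).prod = pentanomial ℂ h :=
    ((IsAlgClosed.splits _).eq_prod_roots_of_monic hmonic).symm
  have hs : (s.map fun z => 1 - C z * X).prod = pentanomial ℂ h := by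
    rw [← reverse_multiset_prod_X_sub_C, hsplit, reverse_pentanomial (by omega)]
  have hcard : s.card = 4 * h := by
    rw [← natDegree_pentanomial (R := ℂ) (by omega : 1 ≤ h), ← hsplit,
      natDegree_multiset_prod_X_sub_C_eq_card]
  have hnorm : ∀ z ∈ s, ‖z‖ ≤ 1 := fun z hz =>
    (norm_eq_one_of_isRoot_prod_cyclotomic hS (hcyc ▸ isRoot_of_mem_roots hz)).le
  have hle := norm_powerSum_le_card hnorm (4 * h + 3)
  rw [powerSum_four_mul_add_three_of_pentanomial hh hs hcard, hcard] at hle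
  norm_cast at hle
  omega
end

section
/- For every integer h ≥ 1 and every odd positive integer n, the cyclotomic polynomial Φ_n(t) does not divide p_h(t) = t^{4h} − t^{4h−1} + t^{2h} − t + 1 in ℤ[t]. -/
/-!
If `Φ_n ∣ p_h`, every primitive `n`-th root of unity `v` is a root of `p_h`. With `u = v ^ (2h)`
and `w = v ^ (2h - 1)` (so `u = w v`), `p_h(v) = 0` becomes `u + u⁻¹ + 1 = w + w⁻¹`; on the unit
circle this reads `2 Re u + 1 = 2 Re w ≤ 2`, so `Re u ≤ 1/2`. Since `2h` is a unit times a divisor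
`d` of `n` modulo `n`, `v` can be chosen with `u = exp(2πi/a)`, `a = n/d`, which rules out `a = 1`
and `a ≥ 7`. For `a = 3` and `a = 5` the equation forces `w² = -1`, resp. `w⁵ = -1`, impossible
for a root of unity of odd order.
-/

open Polynomial

theorem IsPrimitiveRoot.exists_pow_eq_pow_of_dvd {M : Type*} [CommMonoid M] {ζ : M} {n : ℕ}
    [NeZero n] (hζ : IsPrimitiveRoot ζ n) (c : ℕ) :
    ∃ v, IsPrimitiveRoot v n ∧ ∃ d, d ∣ n ∧ v ^ c = ζ ^ d := by
  obtain ⟨d, hd, _, ⟨u, rfl⟩, hcu⟩ := ZMod.eq_unit_mul_divisor (c : ZMod n)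
  set k := ((u⁻¹ : (ZMod n)ˣ) : ZMod n).val
  refine ⟨ζ ^ k, hζ.pow_of_coprime k (ZMod.val_coe_unit_coprime _), d, hd, ?_⟩
  have hkc : ((k * c : ℕ) : ZMod n) = d := by
    rw [Nat.cast_mul, ZMod.natCast_zmod_val, hcu, Units.inv_mul_cancel_left]
  rw [← pow_mul]
  exact pow_eq_pow_of_modEq ((ZMod.natCast_eq_natCast_iff _ _ _).mp hkc) hζ.pow_eq_one

theorem IsPrimitiveRoot.aeval_eq_zero_of_cyclotomic_dvd {R : Type*} [CommRing R] [IsDomain R]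
    {ζ : R} {n : ℕ} (hζ : IsPrimitiveRoot ζ n) (hn : 0 < n) {p : ℤ[X]}
    (hp : cyclotomic n ℤ ∣ p) : aeval ζ p = 0 := by
  refine aeval_eq_zero_of_dvd_aeval_eq_zero hp ?_
  rw [aeval_def, eval₂_eq_eval_map, map_cyclotomic]
  exact hζ.isRoot_cyclotomic hn

theorem Complex.exp_two_pi_mul_I_div_pow {d a : ℕ} (hd : d ≠ 0) :
    Complex.exp (2 * Real.pi * Complex.I / (d * a : ℕ)) ^ d =
      Complex.exp (2 * Real.pi * Complex.I / a) := by
  rw [← Complex.exp_nat_mul]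
  congr 1
  push_cast
  rcases eq_or_ne a 0 with rfl | ha
  · simp
  · field_simp

theorem Complex.one_half_lt_re_exp_two_pi_mul_I_div {a : ℕ} (ha : 7 ≤ a) :
    1 / 2 < (Complex.exp (2 * Real.pi * Complex.I / a)).re := by
  have ha' : (7 : ℝ) ≤ a := by exact_mod_cast ha
  have hx : 2 * Real.pi * Complex.I / a = ((2 * Real.pi / a : ℝ) : ℂ) * Complex.I := by
    push_cast; ring
  rw [hx, Complex.exp_ofReal_mul_I_re, ← Real.cos_pi_div_three]
  have hπ := Real.pi_pos
  apply Real.cos_lt_cos_of_nonneg_of_le_pi (by positivity) (by linarith)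
  rw [div_lt_div_iff₀ (by linarith) (by norm_num)]
  nlinarith

theorem pow_ne_neg_one_of_pow_eq_one_of_odd {M : Type*} [Monoid M] [HasDistribNeg M]
    (hneg : (-1 : M) ≠ 1) {w : M} {n : ℕ} (hwn : w ^ n = 1) (hn : Odd n) (j : ℕ) :
    w ^ j ≠ -1 := by
  intro hj
  apply hneg
  calc (-1 : M) = (w ^ j) ^ n := by rw [hj, hn.neg_one_pow]
    _ = 1 := by rw [← pow_mul, mul_comm, pow_mul, hwn, one_pow]

theorem pow_add_inv_add_one_eq_pow_sub_one_add_inv {K : Type*} [Field K] {v : K} {h : ℕ}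
    (hh : 1 ≤ h) (hv : v ≠ 0)
    (hroot : v ^ (4 * h) - v ^ (4 * h - 1) + v ^ (2 * h) - v + 1 = 0) :
    v ^ (2 * h) + (v ^ (2 * h))⁻¹ + 1 = v ^ (2 * h - 1) + (v ^ (2 * h - 1))⁻¹ := by
  obtain ⟨m, rfl⟩ : ∃ m, h = m + 1 := ⟨h - 1, by omega⟩
  have hsub : 2 * (m + 1) - 1 = 2 * m + 1 := by omega
  have e4 : v ^ (4 * (m + 1)) = (v ^ (2 * m + 1)) ^ 2 * v ^ 2 := by
    rw [← pow_mul, ← pow_add]; ring_nf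
  have e3 : v ^ (4 * (m + 1) - 1) = (v ^ (2 * m + 1)) ^ 2 * v := by
    rw [← pow_mul, ← pow_succ]; congr 1; omega
  have e2 : v ^ (2 * (m + 1)) = v ^ (2 * m + 1) * v := by
    rw [← pow_succ]; ring_nf
  rw [e4, e3, e2] at hroot
  rw [e2, hsub]
  have hw : v ^ (2 * m + 1) ≠ 0 := pow_ne_zero _ hv
  field_simp
  linear_combination hroot

theorem re_le_one_half_of_add_inv_add_one_eq {u w : ℂ} (hu : ‖u‖ = 1) (hw : ‖w‖ = 1)
    (huw : u + u⁻¹ + 1 = w + w⁻¹) : u.re ≤ 1 / 2 := by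
  have hre := congrArg Complex.re huw
  simp only [Complex.inv_eq_conj hu, Complex.inv_eq_conj hw, Complex.add_re, Complex.conj_re,
    Complex.one_re] at hre
  linarith [Complex.re_le_norm w]

theorem sq_eq_neg_one_of_add_inv_add_one_eq {K : Type*} [Field K] {u w : K}
    (hu : IsPrimitiveRoot u 3) (hw : w ≠ 0) (huw : u + u⁻¹ + 1 = w + w⁻¹) : w ^ 2 = -1 := by
  have hsum := hu.geom_sum_eq_zero (by norm_num)
  simp only [Finset.sum_range_succ, Finset.sum_range_zero] at hsum
  have hu0 := hu.ne_zero (by norm_num)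
  field_simp at huw
  have : u * (w ^ 2 + 1) = 0 := by linear_combination -huw + w * hsum
  linear_combination ((mul_eq_zero.mp this).resolve_left hu0)

theorem pow_five_eq_neg_one_of_add_inv_add_one_eq {K : Type*} [Field K] {u w : K}
    (hu : IsPrimitiveRoot u 5) (hw : w ≠ 0) (huw : u + u⁻¹ + 1 = w + w⁻¹) : w ^ 5 = -1 := by
  have hsum := hu.geom_sum_eq_zero (by norm_num)
  simp only [Finset.sum_range_succ, Finset.sum_range_zero] at hsum
  have hu0 := hu.ne_zero (by norm_num)
  have hs : (w + w⁻¹) ^ 2 - (w + w⁻¹) - 1 = 0 := by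
    rw [← huw]; field_simp; linear_combination hsum
  -- `w ^ 2 * ((w + w⁻¹) ^ 2 - (w + w⁻¹) - 1) = w ^ 4 - w ^ 3 + w ^ 2 - w + 1` divides `w ^ 5 + 1`
  have : w ^ 5 + 1 = (w + 1) * w ^ 2 * ((w + w⁻¹) ^ 2 - (w + w⁻¹) - 1) := by
    field_simp; ring
  linear_combination this + (w + 1) * w ^ 2 * hs

theorem stmt_4 (h : ℕ) (hh : 1 ≤ h) (n : ℕ) (hn : 0 < n) (hodd : Odd n) :
    ¬ (cyclotomic n ℤ ∣
      (X : ℤ[X]) ^ (4 * h) - X ^ (4 * h - 1) + X ^ (2 * h) - X + 1) := by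
  intro hdvd
  have : NeZero n := ⟨hn.ne'⟩
  obtain ⟨v, hv, d, ⟨a, rfl⟩, hvu⟩ :=
    (Complex.isPrimitiveRoot_exp _ hn.ne').exists_pow_eq_pow_of_dvd (2 * h)
  have hd : d ≠ 0 := left_ne_zero_of_mul hn.ne'
  have ha : a ≠ 0 := right_ne_zero_of_mul hn.ne'
  rw [Complex.exp_two_pi_mul_I_div_pow hd] at hvu
  have hroot : v ^ (4 * h) - v ^ (4 * h - 1) + v ^ (2 * h) - v + 1 = 0 := by
    simpa using hv.aeval_eq_zero_of_cyclotomic_dvd hn hdvd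
  have huw := pow_add_inv_add_one_eq_pow_sub_one_add_inv hh (hv.ne_zero hn.ne') hroot
  set w := v ^ (2 * h - 1)
  have hw : w ^ (d * a) = 1 := by rw [← pow_mul, mul_comm, pow_mul, hv.pow_eq_one, one_pow]
  have hw0 : w ≠ 0 := pow_ne_zero _ (hv.ne_zero hn.ne')
  have hu := Complex.isPrimitiveRoot_exp a ha
  rw [hvu] at huw
  have hure := re_le_one_half_of_add_inv_add_one_eq
    (Complex.norm_eq_one_of_pow_eq_one hu.pow_eq_one ha)
    (Complex.norm_eq_one_of_pow_eq_one hw hn.ne') huw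
  have hneg : (-1 : ℂ) ≠ 1 := by norm_num
  obtain rfl | rfl | rfl | h7 : a = 1 ∨ a = 3 ∨ a = 5 ∨ 7 ≤ a := by
    have := Nat.odd_iff.mp (Nat.Odd.of_mul_right hodd); omega
  · norm_num [IsPrimitiveRoot.one_right_iff.mp hu] at hure
  · exact pow_ne_neg_one_of_pow_eq_one_of_odd hneg hw hodd _
      (sq_eq_neg_one_of_add_inv_add_one_eq hu hw0 huw)
  · exact pow_ne_neg_one_of_pow_eq_one_of_odd hneg hw hodd _
      (pow_five_eq_neg_one_of_add_inv_add_one_eq hu hw0 huw)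
  · exact (Complex.one_half_lt_re_exp_two_pi_mul_I_div h7).not_ge hure
end

section
/- Let h ≥ 1 be an integer and let n = 2k where k ≥ 1 is an odd integer. If the cyclotomic polynomial Φ_n(t) divides p_h(t) = t^{4h} − t^{4h−1} + t^{2h} − t + 1 in ℤ[t], then n = 10 and h is congruent to either 1 or 2 modulo 5. -/
/-!
For odd `k` the roots of `Φ_{2k}` are the `-τ` with `τ` a primitive `k`-th root of unity, and with
`m = 2h - 1` the equation `p_h(-τ) = 0` reads `Z + Z⁻¹ + W + W⁻¹ = -1` for `Z = τ^(m+1)`, `W = τ^m`.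
Summing over the Galois orbit `τ = ζ^j`, `j ∈ (ℤ/k)ˣ`, and evaluating the Ramanujan sums
`∑ⱼ Z^j = μ(d) φ(k) / φ(d)` (`d` the order of `Z`: the primitive `d`-th roots sum to `μ(d)` by
Möbius inversion, and `(ℤ/k)ˣ → (ℤ/d)ˣ` is `φ(k)/φ(d)`-to-one) gives
`2 φ(d₂) μ(d₁) + 2 φ(d₁) μ(d₂) + φ(d₁) φ(d₂) = 0` for the odd orders `d₁`, `d₂` of `Z` and `W`.
Its only solution with `d₁, d₂ ≠ 3` is `d₁ = d₂ = 5`, and the order `3` is impossible: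
`Z + Z⁻¹ = -1` would force `W² = -1`. Then `ζ = Z / W` has order dividing `5`, so `k = 5`, and
the residue of `h` modulo `5` is read off from the equation at a primitive fifth root of unity.
-/

open Polynomial Finset ArithmeticFunction
open scoped ArithmeticFunction.Moebius Nat

theorem MonoidHom.sum_comp_of_surjective {G H M : Type*} [Group G] [Fintype G] [Group H]
    [Fintype H] [AddCommMonoid M] (f : G →* H) (hf : Function.Surjective f) (F : H → M) :
    ∑ g, F (f g) = (Fintype.card G / Fintype.card H) • ∑ y, F y := by
  classical
  have hfiber : ∀ y, #{g | f g = y} = Fintype.card G / Fintype.card H := by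
    have hconst : ∀ y, #{g | f g = y} = #{g | f g = 1} := fun y ↦
      card_fiber_eq_of_mem_range f (hf y) (hf 1)
    have hcard : Fintype.card G = Fintype.card H * #{g | f g = 1} := by
      rw [← card_univ, card_eq_sum_card_fiberwise (fun g _ ↦ mem_univ (f g)),
        sum_congr rfl fun y _ ↦ hconst y, sum_const, smul_eq_mul, card_univ]
    intro y
    rw [hconst, hcard, Nat.mul_div_cancel_left _ Fintype.card_pos]
  rw [← sum_fiberwise univ f, smul_sum]
  refine sum_congr rfl fun y _ ↦ ?_
  rw [sum_congr rfl fun g hg ↦ by rw [(mem_filter.1 hg).2], sum_const, hfiber]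

namespace IsPrimitiveRoot

section Domain

variable {R : Type*} [CommRing R] [IsDomain R]

theorem sum_nthRootsFinset_one_eq_zero {n : ℕ} {ζ : R} (hζ : IsPrimitiveRoot ζ n) (hn : 1 < n) :
    ∑ τ ∈ nthRootsFinset n (1 : R), τ = 0 := by
  classical
  have : NeZero n := ⟨by omega⟩
  have himage : nthRootsFinset n (1 : R) = (range n).image (ζ ^ ·) := by
    ext τ
    simp only [Polynomial.mem_nthRootsFinset (NeZero.pos n), mem_image, mem_range]
    refine ⟨hζ.eq_pow_of_pow_eq_one, ?_⟩
    rintro ⟨i, -, rfl⟩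
    rw [← pow_mul, mul_comm, pow_mul, hζ.pow_eq_one, one_pow]
  rw [himage, sum_image fun i hi j hj ↦ hζ.pow_inj (mem_range.1 hi) (mem_range.1 hj),
    hζ.geom_sum_eq_zero hn]

theorem sum_primitiveRoots_eq_moebius {n : ℕ} {ζ : R} (hζ : IsPrimitiveRoot ζ n) (hn : 0 < n) :
    ∑ τ ∈ primitiveRoots n R, τ = μ n := by
  classical
  have hdiv : ∀ m > 0, m ∈ {m | m ∣ n} →
      ∑ d ∈ m.divisors, ∑ τ ∈ primitiveRoots d R, τ = if m = 1 then 1 else 0 := by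
    intro m hm hmn
    have hζm : IsPrimitiveRoot (ζ ^ (n / m)) m := hζ.pow hn (Nat.div_mul_cancel hmn).symm
    split_ifs with h1
    · simp [h1, primitiveRoots_one]
    · rw [← sum_biUnion fun i _ j _ hij ↦ disjoint hij, ← nthRoots_one_eq_biUnion_primitiveRoots]
      exact hζm.sum_nthRootsFinset_one_eq_zero (by omega)
  rw [← (sum_eq_iff_sum_mul_moebius_eq_on _ (fun _ _ h₁ h₂ ↦ dvd_trans h₁ h₂)).1 hdiv n hn dvd_rfl,
    sum_eq_single (n, 1)]
  · simp
  · rintro ⟨a, b⟩ hab hne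
    rw [Nat.mem_divisorsAntidiagonal] at hab
    have hb : b ≠ 1 := by rintro rfl; simp_all
    simp [hb]
  · simp [hn.ne']

theorem sum_units_pow_val_eq_moebius {d : ℕ} [NeZero d] {ζ : R} (hζ : IsPrimitiveRoot ζ d) :
    ∑ j : (ZMod d)ˣ, ζ ^ (j : ZMod d).val = μ d := by
  rw [← hζ.sum_primitiveRoots_eq_moebius (NeZero.pos d)]
  refine sum_nbij (fun j ↦ ζ ^ (j : ZMod d).val) (fun j _ ↦ ?_) (fun j₁ _ j₂ _ h ↦ ?_)
    (fun τ hτ ↦ ?_) fun _ _ ↦ rfl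
  · exact (mem_primitiveRoots (NeZero.pos d)).2 (hζ.pow_of_coprime _ (ZMod.val_coe_unit_coprime j))
  · exact Units.ext (ZMod.val_injective d (hζ.pow_inj (ZMod.val_lt _) (ZMod.val_lt _) h))
  · obtain ⟨i, hid, hi, rfl⟩ :=
      hζ.isPrimitiveRoot_iff.1 ((mem_primitiveRoots (NeZero.pos d)).1 hτ)
    refine ⟨ZMod.unitOfCoprime i hi, mem_coe.2 (mem_univ _), ?_⟩
    simp only [ZMod.coe_unitOfCoprime, ZMod.val_natCast, Nat.mod_eq_of_lt hid]

theorem sum_units_pow_val_of_dvd {d k : ℕ} [NeZero k] {ζ : R} (hζ : IsPrimitiveRoot ζ d)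
    (hdk : d ∣ k) :
    ∑ j : (ZMod k)ˣ, ζ ^ (j : ZMod k).val = (φ k / φ d : ℕ) * μ d := by
  have : NeZero d := ⟨fun hd ↦ NeZero.ne k (Nat.eq_zero_of_zero_dvd (hd ▸ hdk))⟩
  have hval (j : (ZMod k)ˣ) : ζ ^ (j : ZMod k).val = ζ ^ (ZMod.unitsMap hdk j : ZMod d).val := by
    rw [ZMod.unitsMap_val, ← ZMod.natCast_val, ZMod.val_natCast, hζ.eq_orderOf, pow_mod_orderOf]
  rw [sum_congr rfl fun j _ ↦ hval j, MonoidHom.sum_comp_of_surjective _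
    (ZMod.unitsMap_surjective hdk) (fun w ↦ ζ ^ (w : ZMod d).val),
    ZMod.card_units_eq_totient, ZMod.card_units_eq_totient, hζ.sum_units_pow_val_eq_moebius,
    nsmul_eq_mul]

theorem aeval_eq_zero_of_cyclotomic_dvd_s5 {ξ : R} {n : ℕ} (hξ : IsPrimitiveRoot ξ n) (hn : 0 < n)
    {p : ℤ[X]} (hp : cyclotomic n ℤ ∣ p) : aeval ξ p = 0 := by
  obtain ⟨q, rfl⟩ := hp
  rw [map_mul, aeval_def, eval₂_eq_eval_map, map_cyclotomic, (hξ.isRoot_cyclotomic hn).eq_zero,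
    zero_mul]

end Domain

theorem neg_of_odd {R : Type*} [CommRing R] [Nontrivial R] {ζ : R} {k : ℕ}
    (hζ : IsPrimitiveRoot ζ k) (hk : Odd k) (hR : ringChar R ≠ 2) :
    IsPrimitiveRoot (-ζ) (2 * k) := by
  have h2 : orderOf (-1 : R) = 2 := by rw [orderOf_neg_one, if_neg hR]
  convert IsPrimitiveRoot.orderOf (-ζ)
  rw [neg_eq_neg_one_mul, (Commute.all _ _).orderOf_mul_eq_mul_orderOf_of_coprime
    (by rw [h2, ← hζ.eq_orderOf]; exact Nat.coprime_two_left.2 hk), h2, ← hζ.eq_orderOf]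

end IsPrimitiveRoot

theorem aeval_neg_X_pow_sub_X_pow_add_X_pow_sub_X_add_one {R : Type*} [CommRing R] (τ : R)
    {m : ℕ} (hm : Odd m) :
    aeval (-τ) (X ^ (2 * m + 2) - X ^ (2 * m + 1) + X ^ (m + 1) - X + 1 : ℤ[X]) =
      τ ^ (2 * m + 2) + τ ^ (2 * m + 1) + τ ^ (m + 1) + τ + 1 := by
  simp only [map_add, map_sub, map_pow, aeval_X, map_one,
    (show Even (2 * m + 2) from ⟨m + 1, by ring⟩).neg_pow, (even_two_mul m).add_one.neg_pow,
    hm.add_one.neg_pow]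
  ring

theorem Nat.dvd_fifteen_of_totient_le_four {n : ℕ} (hn : Odd n) (hsq : Squarefree n)
    (h : φ n ≤ 4) : n ∣ 15 := by
  have hsub : n.primeFactors ⊆ {3, 5} := by
    intro p hp
    obtain ⟨hp, hpn, -⟩ := Nat.mem_primeFactors.1 hp
    have hodd : Odd p := hn.of_dvd_nat hpn
    have hle : p - 1 ≤ 4 := (Nat.le_of_dvd (Nat.totient_pos.2 hn.pos)
      (Nat.totient_prime hp ▸ Nat.totient_dvd_of_dvd hpn)).trans h
    have : p ≤ 5 := by omega
    have := hp.two_le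
    interval_cases p <;> simp_all [Nat.odd_iff]
  calc n = ∏ p ∈ n.primeFactors, p := (Nat.prod_primeFactors_of_squarefree hsq).symm
    _ ∣ ∏ p ∈ {3, 5}, p := prod_dvd_prod_of_subset _ _ _ hsub

theorem Nat.eq_five_or_six_le_totient_of_moebius_eq_neg_one {n : ℕ} (hn : Odd n) (h3 : n ≠ 3)
    (hμ : μ n = -1) : (φ n = 4 ∧ n = 5) ∨ 6 ≤ φ n := by
  have hsq : Squarefree n := moebius_ne_zero_iff_squarefree.1 (by simp [hμ])
  have hn1 : n ≠ 1 := by rintro rfl; simp at hμ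
  have heven : Even (φ n) := Nat.totient_even (by obtain ⟨t, rfl⟩ := hn; omega)
  by_cases h4 : φ n ≤ 4
  · left
    have hmem : n ∈ Nat.divisors 15 :=
      Nat.mem_divisors.2 ⟨Nat.dvd_fifteen_of_totient_le_four hn hsq h4, by norm_num⟩
    rw [show Nat.divisors 15 = {1, 3, 5, 15} by decide] at hmem
    simp only [mem_insert, mem_singleton] at hmem
    rcases hmem with rfl | rfl | rfl | rfl
    · exact absurd rfl hn1
    · exact absurd rfl h3
    · exact ⟨by decide, rfl⟩
    · exact absurd h4 (by decide)
  · obtain ⟨t, ht⟩ := heven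
    omega

theorem eq_five_of_moebius_totient_relation {n₁ n₂ : ℕ} (h₁ : Odd n₁) (h₂ : Odd n₂)
    (h₁3 : n₁ ≠ 3) (h₂3 : n₂ ≠ 3)
    (heq : 2 * φ n₂ * μ n₁ + 2 * φ n₁ * μ n₂ + φ n₁ * φ n₂ = (0 : ℤ)) :
    n₁ = 5 ∧ n₂ = 5 := by
  have hφ₁ : (1 : ℤ) ≤ φ n₁ := by exact_mod_cast Nat.totient_pos.2 h₁.pos
  have hφ₂ : (1 : ℤ) ≤ φ n₂ := by exact_mod_cast Nat.totient_pos.2 h₂.pos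
  have sign (n : ℕ) : 0 ≤ μ n ∨ μ n = -1 := by rcases moebius_eq_or n with h | h | h <;> simp [h]
  have c₁ := fun hμ ↦ Nat.eq_five_or_six_le_totient_of_moebius_eq_neg_one h₁ h₁3 hμ
  have c₂ := fun hμ ↦ Nat.eq_five_or_six_le_totient_of_moebius_eq_neg_one h₂ h₂3 hμ
  rcases sign n₁ with hx | hx <;> rcases sign n₂ with hy | hy
  · nlinarith
  · rw [hy] at heq
    obtain ⟨hB, -⟩ | hB := c₂ hy <;> zify at hB <;> nlinarith
  · rw [hx] at heq
    obtain ⟨hA, -⟩ | hA := c₁ hx <;> zify at hA <;> nlinarith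
  · rw [hx, hy] at heq
    obtain ⟨hA, rfl⟩ | hA := c₁ hx <;> obtain ⟨hB, rfl⟩ | hB := c₂ hy
    · exact ⟨rfl, rfl⟩
    all_goals zify at hA hB; nlinarith

section Field

variable {K : Type*} [Field K]

theorem pow_add_inv_add_pow_add_inv_eq_neg_one {τ : K} (hτ : τ ≠ 0) {m : ℕ}
    (h : τ ^ (2 * m + 2) + τ ^ (2 * m + 1) + τ ^ (m + 1) + τ + 1 = 0) :
    τ ^ (m + 1) + (τ ^ (m + 1))⁻¹ + (τ ^ m + (τ ^ m)⁻¹) = -1 := by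
  field_simp
  linear_combination τ ^ m * h

theorem orderOf_ne_three_of_add_inv_eq [NeZero (2 : K)] {U V : K} (hV : Odd (orderOf V))
    (h : U + U⁻¹ + (V + V⁻¹) = -1) : orderOf U ≠ 3 := by
  intro hU
  have hU3 : IsPrimitiveRoot U 3 := hU ▸ IsPrimitiveRoot.orderOf U
  have hΦ : 1 + U + U ^ 2 = 0 := by simpa [sum_range_succ] using hU3.geom_sum_eq_zero (by norm_num)
  have hUinv : U⁻¹ = U ^ 2 := inv_eq_of_mul_eq_one_right (by linear_combination hU3.pow_eq_one)
  have hV0 : V ≠ 0 := by rintro rfl; simp at hV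
  have hVV : V + V⁻¹ = 0 := by
    rw [hUinv] at h
    linear_combination h - hΦ
  have hV2 : V ^ 2 = -1 := by
    field_simp at hVV
    linear_combination hVV
  have : (-1 : K) ^ orderOf V = 1 := by
    rw [← hV2, ← pow_mul, mul_comm, pow_mul, pow_orderOf_eq_one, one_pow]
  rw [hV.neg_one_pow] at this
  exact (two_ne_zero : (2 : K) ≠ 0) (by linear_combination -this)

theorem moebius_totient_relation_of_forall_units [CharZero K] {k : ℕ} [NeZero k] {Z W : K}
    (hZ : Z ^ k = 1) (hW : W ^ k = 1)
    (h : ∀ j : (ZMod k)ˣ, Z ^ (j : ZMod k).val + (Z ^ (j : ZMod k).val)⁻¹ +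
      (W ^ (j : ZMod k).val + (W ^ (j : ZMod k).val)⁻¹) = -1) :
    2 * φ (orderOf W) * μ (orderOf Z) + 2 * φ (orderOf Z) * μ (orderOf W) +
      φ (orderOf Z) * φ (orderOf W) = (0 : ℤ) := by
  have hZk := orderOf_dvd_of_pow_eq_one hZ
  have hWk := orderOf_dvd_of_pow_eq_one hW
  have hsum : ((φ k / φ (orderOf Z) : ℕ) : K) * μ (orderOf Z) * 2 +
      ((φ k / φ (orderOf W) : ℕ) : K) * μ (orderOf W) * 2 = -φ k := by
    have := sum_congr rfl fun j (_ : j ∈ univ) ↦ h j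
    simp only [← inv_pow, sum_add_distrib, sum_const, card_univ, ZMod.card_units_eq_totient,
      (IsPrimitiveRoot.orderOf Z).sum_units_pow_val_of_dvd hZk,
      (IsPrimitiveRoot.orderOf Z).inv.sum_units_pow_val_of_dvd hZk,
      (IsPrimitiveRoot.orderOf W).sum_units_pow_val_of_dvd hWk,
      (IsPrimitiveRoot.orderOf W).inv.sum_units_pow_val_of_dvd hWk] at this
    rw [nsmul_eq_mul] at this
    linear_combination this
  have hsumℤ : (φ k / φ (orderOf Z) : ℕ) * μ (orderOf Z) * 2 +
      (φ k / φ (orderOf W) : ℕ) * μ (orderOf W) * 2 = -(φ k : ℤ) := by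
    apply Int.cast_injective (α := K)
    simp only [Int.cast_add, Int.cast_mul, Int.cast_natCast, Int.cast_ofNat, Int.cast_neg]
    exact hsum
  have hcancel : ∀ {d}, d ∣ k → ((φ k / φ d : ℕ) : ℤ) * φ d = φ k := fun hd ↦ by
    exact_mod_cast Nat.div_mul_cancel (Nat.totient_dvd_of_dvd hd)
  have hk : (φ k : ℤ) ≠ 0 := by exact_mod_cast (Nat.totient_pos.2 (NeZero.pos k)).ne'
  refine (mul_eq_zero.1 ?_).resolve_left hk
  linear_combination (φ (orderOf Z) * φ (orderOf W) : ℤ) * hsumℤ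
    - (2 * φ (orderOf W) * μ (orderOf Z) : ℤ) * hcancel hZk
    - (2 * φ (orderOf Z) * μ (orderOf W) : ℤ) * hcancel hWk

theorem eq_five_of_forall_isPrimitiveRoot [CharZero K] {k m : ℕ} (hk : Odd k) {ζ : K}
    (hζ : IsPrimitiveRoot ζ k)
    (hrel : ∀ τ : K, IsPrimitiveRoot τ k →
      τ ^ (2 * m + 2) + τ ^ (2 * m + 1) + τ ^ (m + 1) + τ + 1 = 0) :
    k = 5 := by
  have : NeZero k := ⟨hk.pos.ne'⟩
  have hrel' : ∀ τ : K, IsPrimitiveRoot τ k →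
      τ ^ (m + 1) + (τ ^ (m + 1))⁻¹ + (τ ^ m + (τ ^ m)⁻¹) = -1 := fun τ hτ ↦
    pow_add_inv_add_pow_add_inv_eq_neg_one (hτ.ne_zero hk.pos.ne') (hrel τ hτ)
  set Z := ζ ^ (m + 1)
  set W := ζ ^ m with hW
  have hZk : Z ^ k = 1 := by rw [← pow_mul, mul_comm, pow_mul, hζ.pow_eq_one, one_pow]
  have hWk : W ^ k = 1 := by rw [← pow_mul, mul_comm, pow_mul, hζ.pow_eq_one, one_pow]
  have heq := moebius_totient_relation_of_forall_units hZk hWk fun j ↦ by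
    have := hrel' _ (hζ.pow_of_coprime _ (ZMod.val_coe_unit_coprime j))
    rwa [pow_right_comm ζ _ (m + 1), pow_right_comm ζ _ m] at this
  have hZodd := hk.of_dvd_nat (orderOf_dvd_of_pow_eq_one hZk)
  have hWodd := hk.of_dvd_nat (orderOf_dvd_of_pow_eq_one hWk)
  obtain ⟨hZ5, hW5⟩ := eq_five_of_moebius_totient_relation hZodd hWodd
    (orderOf_ne_three_of_add_inv_eq hWodd (hrel' ζ hζ))
    (orderOf_ne_three_of_add_inv_eq hZodd (by linear_combination hrel' ζ hζ)) heq
  have hζ5 : ζ ^ 5 = 1 := by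
    calc ζ ^ 5 = ζ ^ 5 * W ^ 5 := by rw [← hW5, pow_orderOf_eq_one, mul_one]
      _ = Z ^ 5 := by rw [← mul_pow, hW, ← pow_succ']
      _ = 1 := hZ5 ▸ pow_orderOf_eq_one Z
  exact Nat.dvd_antisymm (hζ.dvd_of_pow_eq_one 5 hζ5) (hZ5 ▸ orderOf_dvd_of_pow_eq_one hZk)

theorem mod_five_of_isPrimitiveRoot_five [CharZero K] {ω : K} (hω : IsPrimitiveRoot ω 5) {m : ℕ}
    (h : ω ^ (2 * m + 2) + ω ^ (2 * m + 1) + ω ^ (m + 1) + ω + 1 = 0) :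
    m % 5 = 1 ∨ m % 5 = 3 := by
  have hΦ : 1 + ω + ω ^ 2 + ω ^ 3 + ω ^ 4 = 0 := by
    simpa [sum_range_succ] using hω.geom_sum_eq_zero (by norm_num)
  have hred : ∀ e, ω ^ e = ω ^ (e % 5) := fun e ↦ by rw [hω.eq_orderOf, pow_mod_orderOf]
  rw [hred (2 * m + 2), hred (2 * m + 1), hred (m + 1),
    show (2 * m + 2) % 5 = (2 * (m % 5) + 2) % 5 by omega,
    show (2 * m + 1) % 5 = (2 * (m % 5) + 1) % 5 by omega,
    show (m + 1) % 5 = (m % 5 + 1) % 5 by omega] at h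
  have h5 : (5 : K) ≠ 0 := by norm_num
  have hr : m % 5 < 5 := Nat.mod_lt _ (by norm_num)
  interval_cases m % 5 <;> norm_num at h ⊢ <;> refine h5 ?_
  -- Bézout identities `5 = a · Φ₅(ω) + b · h` in `ℤ[ω]`
  · linear_combination (8 + 3 * ω) * hΦ + (-3 - 2 * ω - 2 * ω ^ 2 - 3 * ω ^ 3) * h
  · linear_combination (5 - ω + 2 * ω ^ 2) * hΦ + (-2 * ω - ω ^ 2 - 2 * ω ^ 3) * h
  · linear_combination (-4 + ω - ω ^ 3) * hΦ + (3 + ω ^ 2 + ω ^ 3) * h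

end Field

theorem stmt_5_general (h : ℕ) (hh : 1 ≤ h) (k : ℕ) (hkodd : Odd k)
    (n : ℕ) (hn : n = 2 * k)
    (hdvd : cyclotomic n ℤ ∣
      (X : ℤ[X]) ^ (4 * h) - X ^ (4 * h - 1) + X ^ (2 * h) - X + 1) :
    n = 10 ∧ (h % 5 = 1 ∨ h % 5 = 2) := by
  subst hn
  obtain ⟨m, hm⟩ : ∃ m, 2 * h = m + 1 := ⟨2 * h - 1, by omega⟩
  have hmodd : Odd m := ⟨h - 1, by omega⟩
  rw [show 4 * h - 1 = 2 * m + 1 by omega, show 4 * h = 2 * m + 2 by omega, hm] at hdvd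
  have hrel : ∀ τ : ℂ, IsPrimitiveRoot τ k →
      τ ^ (2 * m + 2) + τ ^ (2 * m + 1) + τ ^ (m + 1) + τ + 1 = 0 := fun τ hτ ↦ by
    rw [← aeval_neg_X_pow_sub_X_pow_add_X_pow_sub_X_add_one τ hmodd]
    exact (hτ.neg_of_odd hkodd (by simp [ringChar.eq_zero])).aeval_eq_zero_of_cyclotomic_dvd_s5
      (Nat.mul_pos two_pos hkodd.pos) hdvd
  obtain rfl : k = 5 :=
    eq_five_of_forall_isPrimitiveRoot hkodd (Complex.isPrimitiveRoot_exp k hkodd.pos.ne') hrel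
  have hω := Complex.isPrimitiveRoot_exp 5 (by norm_num)
  have := mod_five_of_isPrimitiveRoot_five hω (hrel _ hω)
  omega

theorem stmt_5 (h : ℕ) (hh : 1 ≤ h) (k : ℕ) (hk : 1 ≤ k) (hkodd : Odd k)
    (n : ℕ) (hn : n = 2 * k)
    (hdvd : cyclotomic n ℤ ∣
      (X : ℤ[X]) ^ (4 * h) - X ^ (4 * h - 1) + X ^ (2 * h) - X + 1) :
    n = 10 ∧ (h % 5 = 1 ∨ h % 5 = 2) :=
  stmt_5_general h hh k hkodd n hn hdvd
end

section
/- Fix an integer h ≥ 1, and suppose p_h(t) = t^{4h} − t^{4h−1} + t^{2h} − t + 1 is a product of cyclotomic polynomials. Then there exist an integer k ≥ 0 and positive integers n_1, …, n_k, each of which is a multiple of 4 and is not a power of 2, such that p_h(t) = Φ_10(t) · ∏_{j=1}^{k} Φ_{n_j}(t) in ℤ[t]. -/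
/-!
Every cyclotomic factor `Φ_n` of `p_h` has a primitive root `ζ = exp (2πi/n)` among the roots of
`p_h`, and there `p_h(ζ) = 0` rewrites as `(ζ - 1)(ζ^(4h-1) - 1) = -ζ^(2h)`. Taking absolute values,
`1 ≤ 2 |ζ - 1| ≤ 4π/n`, so `n ≤ 12`. Since `p_h(1) = 1` and `p_h(-1) = 5`, the value `Φ_n(1)` divides
`1` (so `n` is not a prime power) and `Φ_n(-1)` divides `5` (ruling out `n = 1, 6`), leaving
`n ∈ {10, 12}`. Finally `Φ_10(-1) = 5` and `Φ_12(-1) = 1` force `Φ_10` to occur exactly once.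
-/

open Polynomial

noncomputable def ph (R : Type*) [CommRing R] (h : ℕ) : R[X] :=
  X ^ (4 * h) - X ^ (4 * h - 1) + X ^ (2 * h) - X + 1

section ph

variable {R : Type*} [CommRing R] {h : ℕ}

lemma map_ph {S : Type*} [CommRing S] (f : R →+* S) (h : ℕ) : (ph R h).map f = ph S h := by
  simp [ph]

lemma eval_one_ph (h : ℕ) : (ph R h).eval 1 = 1 := by
  simp [ph]

lemma eval_neg_one_ph (hh : 1 ≤ h) : (ph R h).eval (-1) = 5 := by
  have hodd : Odd (4 * h - 1) := ⟨2 * h - 1, by omega⟩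
  have heven : Even (4 * h) := ⟨2 * h, by ring⟩
  norm_num [ph, hodd.neg_one_pow, heven.neg_one_pow]

lemma sub_one_mul_pow_sub_one_of_isRoot_ph (hh : 1 ≤ h) {z : R} (hz : (ph R h).IsRoot z) :
    (z - 1) * (z ^ (4 * h - 1) - 1) = -z ^ (2 * h) := by
  have hsplit : z ^ (4 * h) = z ^ (4 * h - 1) * z := by
    rw [← pow_succ]; congr 1; omega
  simp only [IsRoot.def, ph, eval_add, eval_sub, eval_pow, eval_X, eval_one, hsplit] at hz
  linear_combination hz

end ph

lemma one_le_two_mul_norm_sub_one_of_isRoot_ph {K : Type*} [NormedField K] {h : ℕ} (hh : 1 ≤ h)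
    {z : K} (hz1 : ‖z‖ = 1) (hz : (ph K h).IsRoot z) : 1 ≤ 2 * ‖z - 1‖ := by
  have hnorm : ‖z - 1‖ * ‖z ^ (4 * h - 1) - 1‖ = 1 := by
    simpa [hz1] using congrArg norm (sub_one_mul_pow_sub_one_of_isRoot_ph hh hz)
  have hle : ‖z ^ (4 * h - 1) - 1‖ ≤ 2 := by
    simpa [hz1, one_add_one_eq_two] using norm_sub_le (z ^ (4 * h - 1)) 1
  nlinarith [norm_nonneg (z - 1)]

lemma le_twelve_of_cyclotomic_dvd_ph {h n : ℕ} (hh : 1 ≤ h) (hn : 0 < n)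
    (hdvd : cyclotomic n ℤ ∣ ph ℤ h) : n ≤ 12 := by
  set θ : ℝ := 2 * Real.pi / n
  set ζ := Complex.exp (Complex.I * θ)
  have hprim : IsPrimitiveRoot ζ n := by
    convert Complex.isPrimitiveRoot_exp n hn.ne' using 2
    simp only [θ]; push_cast; ring
  have hroot : (ph ℂ h).IsRoot ζ := by
    have hdvdC := Polynomial.map_dvd (Int.castRingHom ℂ) hdvd
    rw [map_cyclotomic, map_ph] at hdvdC
    exact (hprim.isRoot_cyclotomic hn).dvd hdvdC
  have hdist : ‖ζ - 1‖ ≤ θ :=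
    Real.norm_exp_I_mul_ofReal_sub_one_le.trans_eq (Real.norm_of_nonneg (by positivity))
  have key : 1 ≤ 2 * θ :=
    (one_le_two_mul_norm_sub_one_of_isRoot_ph hh (Complex.norm_exp_I_mul_ofReal θ) hroot).trans
      (by linarith)
  have hn' : (n : ℝ) < 13 := by
    rw [show 2 * θ = 4 * Real.pi / n by ring, le_div_iff₀ (by positivity)] at key
    linarith [Real.pi_lt_d2]
  exact Nat.lt_succ_iff.mp (by exact_mod_cast hn')

lemma eval_neg_one_cyclotomic_ten (R : Type*) [CommRing R] :
    (cyclotomic 10 R).eval (-1) = 5 := by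
  have : Fact (Nat.Prime 5) := ⟨by norm_num⟩
  have hexpand := congrArg (eval (-1))
    (cyclotomic_expand_eq_cyclotomic_mul Nat.prime_two (by norm_num : ¬ 2 ∣ 5) R)
  rw [expand_eval, eval_mul, cyclotomic_prime] at hexpand
  norm_num [Finset.sum_range_succ] at hexpand
  linear_combination hexpand.symm

lemma eval_neg_one_cyclotomic_twelve (R : Type*) [CommRing R] :
    (cyclotomic 12 R).eval (-1) = 1 := by
  rw [show 12 = 6 * 2 by rfl, ← cyclotomic_expand_eq_cyclotomic Nat.prime_two (by norm_num),
    expand_eval, cyclotomic_six]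
  simp

lemma not_dvd_one_eval_one_cyclotomic {n : ℕ} (hn : IsPrimePow n) :
    ¬ (cyclotomic n ℤ).eval 1 ∣ 1 := by
  obtain ⟨p, k, hp, hk, rfl⟩ := hn
  obtain ⟨k, rfl⟩ := Nat.exists_eq_add_of_lt hk
  have := Fact.mk hp.nat_prime
  rw [zero_add, eval_one_cyclotomic_prime_pow]
  exact_mod_cast hp.nat_prime.not_dvd_one

lemma eq_ten_or_twelve_of_cyclotomic_dvd_ph {h n : ℕ} (hh : 1 ≤ h) (hn : 0 < n)
    (hdvd : cyclotomic n ℤ ∣ ph ℤ h) : n = 10 ∨ n = 12 := by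
  have hle := le_twelve_of_cyclotomic_dvd_ph hh hn hdvd
  have h1 : (cyclotomic n ℤ).eval 1 ∣ 1 := by
    simpa only [eval_one_ph] using eval_dvd (x := 1) hdvd
  have h5 : (cyclotomic n ℤ).eval (-1) ∣ 5 := by
    simpa only [eval_neg_one_ph hh] using eval_dvd (x := -1) hdvd
  have hpp : ¬ IsPrimePow n := fun hpp => not_dvd_one_eval_one_cyclotomic hpp h1
  interval_cases n
  all_goals first
    | omega
    | exact absurd (by decide +kernel) hpp
    | norm_num [cyclotomic_six] at h5

lemma Multiset.prod_map_eq_pow_count_mul_pow_count {ι M : Type*} [DecidableEq ι] [CommMonoid M]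
    {s : Multiset ι} {a b : ι} (hab : a ≠ b) (hs : ∀ i ∈ s, i = a ∨ i = b) (f : ι → M) :
    (s.map f).prod = f a ^ s.count a * f b ^ s.count b := by
  rw [Finset.prod_multiset_map_count, ← Finset.prod_pair hab (f := fun i => f i ^ s.count i)]
  refine Finset.prod_subset (fun i hi => ?_) (fun i _ hi => ?_)
  · simpa using hs i (Multiset.mem_toFinset.mp hi)
  · rw [Multiset.count_eq_zero_of_notMem (Multiset.mem_toFinset.not.mp hi), pow_zero]

theorem stmt_7 (h : ℕ) (hh : 1 ≤ h)
    (hprod : ∃ S : Multiset ℕ, (∀ n ∈ S, 0 < n) ∧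
      ((X : ℤ[X]) ^ (4 * h) - X ^ (4 * h - 1) + X ^ (2 * h) - X + 1 =
        (S.map (fun n => cyclotomic n ℤ)).prod)) :
    ∃ (k : ℕ) (n : Fin k → ℕ),
      (∀ j, 0 < n j ∧ 4 ∣ n j ∧ ¬ ∃ e : ℕ, n j = 2 ^ e) ∧
      ((X : ℤ[X]) ^ (4 * h) - X ^ (4 * h - 1) + X ^ (2 * h) - X + 1 =
        cyclotomic 10 ℤ * ∏ j, cyclotomic (n j) ℤ) := by
  obtain ⟨S, hSpos, hS⟩ := hprod
  change ph ℤ h = _ at hS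
  have hmem : ∀ n ∈ S, n = 10 ∨ n = 12 := fun n hn =>
    eq_ten_or_twelve_of_cyclotomic_dvd_ph hh (hSpos n hn)
      (hS ▸ Multiset.dvd_prod (Multiset.mem_map_of_mem _ hn))
  have hfactor : ph ℤ h = cyclotomic 10 ℤ ^ S.count 10 * cyclotomic 12 ℤ ^ S.count 12 := by
    rw [hS, Multiset.prod_map_eq_pow_count_mul_pow_count (by norm_num) hmem]
  have hcount : S.count 10 = 1 := by
    have h5 := congrArg (eval (-1)) hfactor
    rw [eval_neg_one_ph hh, eval_mul, eval_pow, eval_pow, eval_neg_one_cyclotomic_ten,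
      eval_neg_one_cyclotomic_twelve, one_pow, mul_one] at h5
    exact pow_right_injective₀ (by norm_num : (0 : ℤ) < 5) (by norm_num)
      (h5.symm.trans (pow_one 5).symm)
  refine ⟨S.count 12, fun _ => 12, fun _ => ⟨by norm_num, by norm_num, ?_⟩, ?_⟩
  · rintro ⟨e, he⟩
    have h3 : 3 ∣ 2 ^ e := he ▸ (by norm_num)
    exact absurd (Nat.prime_three.dvd_of_dvd_pow h3) (by norm_num)
  · change ph ℤ h = _
    rw [Fin.prod_const, hfactor, hcount, pow_one]
end

section
/- Fix an integer h ≥ 1. If p_h(t) = t^{4h} − t^{4h−1} + t^{2h} − t + 1 is a product of cyclotomic polynomials, then h is congruent to either 1 or 2 modulo 5. -/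
/-!
Evaluating at `-1` gives `∏ Φₙ(-1) = p_h(-1) = 5`, so `5 ∣ Φₙ(-1)` for some factor. Modulo 5,
`-1` is then a primitive root of unity of order the `5`-free part of `n`, which forces
`n = 2 · 5^k`, with `k ≥ 1` because `Φ₂(-1) = 0`. Hence `Φ_{5^k}` divides
`p_h(-t) = t^{4h} + t^{4h-1} + t^{2h} + t + 1`, and so also the polynomial `r` obtained by reducing
the exponents modulo `5^k`. As `Φ_{5^k}(t) = ∑_{i<5} t^{i·5^{k-1}}`, the cofactor of `r` has the
first `5^{k-1}` coefficients of `r` as coefficients, and these sum to `r(1)/5 = 1`; since the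
constant and linear coefficients of `r` are positive, `k = 1`. Finally `Φ₅(2) = 31` must divide
`r(2)`, which happens only for `h ≡ 1, 2 (mod 5)`.
-/

open Polynomial

theorem X_pow_sub_one_dvd_X_pow_sub_X_pow_mod {R : Type*} [CommRing R] (N e : ℕ) :
    (X ^ N - 1 : R[X]) ∣ X ^ e - X ^ (e % N) := by
  have : (X : R[X]) ^ e - X ^ (e % N) = X ^ (e % N) * ((X ^ N) ^ (e / N) - 1) := by
    rw [mul_sub, ← pow_mul, ← pow_add, Nat.mod_add_div, mul_one]
  rw [this]
  exact dvd_mul_of_dvd_right (by simpa using sub_dvd_pow_sub_pow (X ^ N : R[X]) 1 (e / N)) _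

theorem IsPrimitiveRoot.neg_of_odd_s8 {R : Type*} [CommRing R] [Nontrivial R] (hR : ringChar R ≠ 2)
    {ζ : R} {n : ℕ} (hζ : IsPrimitiveRoot ζ n) (hn : Odd n) : IsPrimitiveRoot (-ζ) (2 * n) := by
  convert IsPrimitiveRoot.orderOf (-ζ)
  rw [neg_eq_neg_one_mul, (Commute.all _ _).orderOf_mul_eq_mul_orderOf_of_coprime,
    orderOf_neg_one, if_neg hR, ← hζ.eq_orderOf]
  · rw [orderOf_neg_one, if_neg hR, ← hζ.eq_orderOf]
    exact Nat.coprime_two_left.mpr hn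

theorem cyclotomic_comp_neg_X_dvd_cyclotomic_two_mul {n : ℕ} (hn : Odd n) :
    (cyclotomic n ℤ).comp (-X) ∣ cyclotomic (2 * n) ℤ := by
  rw [← dvd_comp_neg_X_iff]
  have hn0 : 0 < n := hn.pos
  rw [← map_dvd_map (Int.castRingHom ℚ) Int.cast_injective (cyclotomic.monic n ℤ), map_comp,
    Polynomial.map_neg, map_X, map_cyclotomic_int, map_cyclotomic_int]
  obtain ⟨ζ, hζ⟩ : ∃ ζ : ℂ, IsPrimitiveRoot ζ n := ⟨_, Complex.isPrimitiveRoot_exp n hn0.ne'⟩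
  rw [cyclotomic_eq_minpoly_rat hζ hn0]
  refine minpoly.dvd ℚ ζ ?_
  rw [aeval_comp, aeval_neg, aeval_X, aeval_def, eval₂_eq_eval_map, map_cyclotomic]
  exact (hζ.neg_of_odd_s8 (by simp) hn).isRoot_cyclotomic (by positivity)

theorem exists_eq_two_mul_pow_of_dvd_eval_neg_one {p n : ℕ} [Fact p.Prime] (hp : p ≠ 2)
    (hn : n ≠ 0) (hdvd : (p : ℤ) ∣ (cyclotomic n ℤ).eval (-1)) : ∃ k, n = 2 * p ^ k := by
  obtain ⟨k, m, hpm, rfl⟩ := Nat.exists_eq_pow_mul_and_not_dvd hn p (Fact.out : p.Prime).ne_one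
  have : NeZero (m : ZMod p) := ⟨by rwa [Ne, ZMod.natCast_eq_zero_iff]⟩
  have hroot : (cyclotomic (p ^ k * m) (ZMod p)).IsRoot (-1) := by
    have := eval_intCast_map (Int.castRingHom (ZMod p)) (cyclotomic (p ^ k * m) ℤ) (-1)
    rw [map_cyclotomic_int, Int.cast_neg, Int.cast_one] at this
    rw [IsRoot, this, eq_intCast, ZMod.intCast_zmod_eq_zero_iff_dvd]
    exact hdvd
  have h2 : m = 2 := ((isRoot_cyclotomic_prime_pow_mul_iff_of_charP.mp hroot).unique
    (IsPrimitiveRoot.neg_one p hp))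
  exact ⟨k, by rw [h2, mul_comm]⟩

theorem coeff_cyclotomic_prime_pow_mul_of_lt {R : Type*} [CommRing R] {p k j : ℕ} [Fact p.Prime]
    (g : R[X]) (hj : j < p ^ k) : (cyclotomic (p ^ (k + 1)) R * g).coeff j = g.coeff j := by
  rw [cyclotomic_prime_pow_eq_geom_sum Fact.out, Finset.sum_mul, finsetSum_coeff,
    Finset.sum_eq_single 0]
  · simp
  · intro i _ hi
    rw [← pow_mul, coeff_X_pow_mul', if_neg]
    exact fun hle => hj.not_ge (le_trans (Nat.le_mul_of_pos_right _ (Nat.pos_of_ne_zero hi)) hle)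
  · simp [(Fact.out : p.Prime).pos]

theorem sum_coeff_range_eq_one_of_cyclotomic_prime_pow_dvd {p k : ℕ} [Fact p.Prime] {r : ℤ[X]}
    (hdeg : r.natDegree < p ^ (k + 1)) (h1 : r.eval 1 = p)
    (hdvd : cyclotomic (p ^ (k + 1)) ℤ ∣ r) : ∑ j ∈ Finset.range (p ^ k), r.coeff j = 1 := by
  have hp : p.Prime := Fact.out
  obtain ⟨g, rfl⟩ := hdvd
  have hg1 : g.eval 1 = 1 := by
    rw [eval_mul, eval_one_cyclotomic_prime_pow] at h1
    exact (mul_eq_left₀ (by exact_mod_cast hp.ne_zero)).mp h1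
  have hgdeg : g.natDegree < p ^ k := by
    have hg0 : g ≠ 0 := by rintro rfl; simp at hg1
    rw [(cyclotomic.monic _ ℤ).natDegree_mul' hg0, natDegree_cyclotomic,
      Nat.totient_prime_pow_succ hp, pow_succ] at hdeg
    have : p ^ k * (p - 1) + p ^ k = p ^ k * p := by
      rw [← Nat.mul_add_one, Nat.sub_add_cancel hp.one_le]
    omega
  rw [← hg1, eval_eq_sum_range' hgdeg]
  refine Finset.sum_congr rfl fun j hj => ?_
  rw [coeff_cyclotomic_prime_pow_mul_of_lt g (Finset.mem_range.mp hj), one_pow, mul_one]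

theorem eq_zero_of_cyclotomic_five_pow_dvd {k a b c : ℕ} (ha : a < 5 ^ (k + 1))
    (hb : b < 5 ^ (k + 1)) (hc : c < 5 ^ (k + 1))
    (hdvd : cyclotomic (5 ^ (k + 1)) ℤ ∣ 1 + X + X ^ a + X ^ b + X ^ c) : k = 0 := by
  have : Fact (Nat.Prime 5) := ⟨Nat.prime_five⟩
  set r : ℤ[X] := 1 + X + X ^ a + X ^ b + X ^ c
  have hdeg : r.natDegree < 5 ^ (k + 1) := by
    have : r.natDegree ≤ 5 ^ (k + 1) - 1 := by
      simp only [r]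
      compute_degree
      all_goals omega
    omega
  have hsum := sum_coeff_range_eq_one_of_cyclotomic_prime_pow_dvd hdeg (by simp [r]) hdvd
  by_contra hk
  have hcoeff : ∀ j, 0 ≤ r.coeff j ∧ (j ≤ 1 → 1 ≤ r.coeff j) := by
    intro j
    simp only [r, coeff_add, coeff_one, coeff_X_pow, coeff_X]
    split_ifs <;> omega
  have h01 : r.coeff 0 + r.coeff 1 ≤ ∑ j ∈ Finset.range (5 ^ k), r.coeff j := by
    have : 1 < 5 ^ k := Nat.one_lt_pow hk (by norm_num)
    exact Finset.add_le_sum (fun j _ => (hcoeff j).1) (Finset.mem_range.mpr (by omega))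
      (Finset.mem_range.mpr this) zero_ne_one
  linarith [(hcoeff 0).2 zero_le_one, (hcoeff 1).2 le_rfl]

theorem mod_five_of_cyclotomic_five_dvd {h : ℕ} (hh : 1 ≤ h)
    (hdvd : cyclotomic 5 ℤ ∣ 1 + X + X ^ (2 * h % 5) + X ^ ((4 * h - 1) % 5) + X ^ (4 * h % 5)) :
    h % 5 = 1 ∨ h % 5 = 2 := by
  have : Fact (Nat.Prime 5) := ⟨Nat.prime_five⟩
  have h31 := eval_dvd (x := (2 : ℤ)) hdvd
  rw [cyclotomic_prime ℤ 5] at h31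
  simp only [eval_add, eval_one, eval_X, eval_pow, Finset.sum_range_succ,
    Finset.sum_range_zero] at h31
  obtain h0 | h1 | h2 | h3 | h4 : h % 5 = 0 ∨ h % 5 = 1 ∨ h % 5 = 2 ∨ h % 5 = 3 ∨ h % 5 = 4 := by
    omega
  · rw [show 2 * h % 5 = 0 by omega, show (4 * h - 1) % 5 = 4 by omega,
      show 4 * h % 5 = 0 by omega] at h31
    norm_num at h31
  · exact Or.inl h1
  · exact Or.inr h2
  · rw [show 2 * h % 5 = 1 by omega, show (4 * h - 1) % 5 = 1 by omega,
      show 4 * h % 5 = 2 by omega] at h31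
    norm_num at h31
  · rw [show 2 * h % 5 = 3 by omega, show (4 * h - 1) % 5 = 0 by omega,
      show 4 * h % 5 = 1 by omega] at h31
    norm_num at h31

noncomputable def pPoly (h : ℕ) : ℤ[X] := X ^ (4 * h) - X ^ (4 * h - 1) + X ^ (2 * h) - X + 1

theorem pPoly_comp_neg_X {h : ℕ} (hh : 1 ≤ h) :
    (pPoly h).comp (-X) = X ^ (4 * h) + X ^ (4 * h - 1) + X ^ (2 * h) + X + 1 := by
  simp only [pPoly, sub_comp, add_comp, pow_comp, X_comp, one_comp]
  rw [Even.neg_pow ⟨2 * h, by ring⟩, Odd.neg_pow ⟨2 * h - 1, by omega⟩, Even.neg_pow ⟨h, by ring⟩]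
  ring

theorem pPoly_eval_neg_one {h : ℕ} (hh : 1 ≤ h) : (pPoly h).eval (-1) = 5 := by
  have := congrArg (eval 1) (pPoly_comp_neg_X hh)
  simp only [eval_comp, eval_neg, eval_X, eval_add, eval_pow, eval_one, one_pow] at this
  rw [this]
  norm_num

theorem X_pow_sub_one_dvd_pPoly_comp_neg_X_sub {h : ℕ} (hh : 1 ≤ h) (N : ℕ) :
    X ^ N - 1 ∣ (pPoly h).comp (-X) -
      (1 + X + X ^ (2 * h % N) + X ^ ((4 * h - 1) % N) + X ^ (4 * h % N)) := by
  have : (pPoly h).comp (-X) -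
      (1 + X + X ^ (2 * h % N) + X ^ ((4 * h - 1) % N) + X ^ (4 * h % N)) =
      (X ^ (2 * h) - X ^ (2 * h % N)) + (X ^ (4 * h - 1) - X ^ ((4 * h - 1) % N)) +
        (X ^ (4 * h) - X ^ (4 * h % N)) := by
    rw [pPoly_comp_neg_X hh]; ring
  rw [this]
  exact dvd_add (dvd_add (X_pow_sub_one_dvd_X_pow_sub_X_pow_mod _ _)
    (X_pow_sub_one_dvd_X_pow_sub_X_pow_mod _ _)) (X_pow_sub_one_dvd_X_pow_sub_X_pow_mod _ _)

theorem cyclotomic_dvd_of_cyclotomic_two_mul_dvd_pPoly {h N : ℕ} (hh : 1 ≤ h) (hN : Odd N)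
    (hdvd : cyclotomic (2 * N) ℤ ∣ pPoly h) :
    cyclotomic N ℤ ∣ 1 + X + X ^ (2 * h % N) + X ^ ((4 * h - 1) % N) + X ^ (4 * h % N) := by
  have hcomp : cyclotomic N ℤ ∣ (pPoly h).comp (-X) :=
    (dvd_comp_neg_X_iff _ _).mpr ((cyclotomic_comp_neg_X_dvd_cyclotomic_two_mul hN).trans hdvd)
  simpa using dvd_sub hcomp ((cyclotomic.dvd_X_pow_sub_one _ ℤ).trans
    (X_pow_sub_one_dvd_pPoly_comp_neg_X_sub hh N))

theorem stmt_8 (h : ℕ) (hh : 1 ≤ h)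
    (hprod : ∃ S : Multiset ℕ, (∀ n ∈ S, 0 < n) ∧
      ((X : ℤ[X]) ^ (4 * h) - X ^ (4 * h - 1) + X ^ (2 * h) - X + 1 =
        (S.map (fun n => cyclotomic n ℤ)).prod)) :
    h % 5 = 1 ∨ h % 5 = 2 := by
  have : Fact (Nat.Prime 5) := ⟨Nat.prime_five⟩
  obtain ⟨S, hSpos, hP⟩ := hprod
  change pPoly h = _ at hP
  have hdvd : ∀ n ∈ S, cyclotomic n ℤ ∣ pPoly h :=
    fun n hn => hP ▸ Multiset.dvd_prod (Multiset.mem_map_of_mem _ hn)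
  obtain ⟨n, hnS, h5n⟩ : ∃ n ∈ S, (5 : ℤ) ∣ (cyclotomic n ℤ).eval (-1) := by
    refine (Nat.prime_iff_prime_int.mp Nat.prime_five).exists_mem_multiset_map_dvd ?_
    rw [show (fun n => (cyclotomic n ℤ).eval (-1)) = eval (-1) ∘ fun n => cyclotomic n ℤ from rfl,
      ← Multiset.map_map, ← eval_multiset_prod, ← hP, pPoly_eval_neg_one hh]
    norm_num
  obtain ⟨k, rfl⟩ := exists_eq_two_mul_pow_of_dvd_eval_neg_one (by norm_num) (hSpos n hnS).ne' h5n
  obtain ⟨k, rfl⟩ : ∃ k', k = k' + 1 := by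
    refine Nat.exists_eq_add_one.mpr (Nat.pos_of_ne_zero ?_)
    rintro rfl
    simpa [pPoly_eval_neg_one hh] using eval_dvd (x := -1) (hdvd _ hnS)
  have hred := cyclotomic_dvd_of_cyclotomic_two_mul_dvd_pPoly hh (Odd.pow (by decide))
    (hdvd _ hnS)
  have hN : 0 < 5 ^ (k + 1) := by positivity
  obtain rfl := eq_zero_of_cyclotomic_five_pow_dvd (Nat.mod_lt _ hN) (Nat.mod_lt _ hN)
    (Nat.mod_lt _ hN) hred
  exact mod_five_of_cyclotomic_five_dvd hh hred
end

section
/- For every integer h ≥ 1, the following identity holds in ℤ[X]: q_h(X²) = p_h(X) · p_h(−X), where p_h(t) = t^{4h} − t^{4h−1} + t^{2h} − t + 1 and q_h(t) = t^{4h} − t^{4h−1} + 2t^{3h} + t^{2h} + 2t^{h} − t + 1. -/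
open Polynomial

theorem stmt_9 (h : ℕ) (hh : 1 ≤ h) :
    ((X : ℤ[X]) ^ (4 * h) - X ^ (4 * h - 1) + 2 * X ^ (3 * h) + X ^ (2 * h)
        + 2 * X ^ h - X + 1).comp (X ^ 2) =
      ((X : ℤ[X]) ^ (4 * h) - X ^ (4 * h - 1) + X ^ (2 * h) - X + 1) *
        ((X : ℤ[X]) ^ (4 * h) - X ^ (4 * h - 1) + X ^ (2 * h) - X + 1).comp (-X) := by
  obtain ⟨k, rfl⟩ := Nat.exists_eq_add_of_le hh
  have e1 : 4 * (1 + k) = 4 * k + 4 := by ring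
  have e2 : 4 * k + 4 - 1 = 4 * k + 3 := by omega
  have e3 : 3 * (1 + k) = 3 * k + 3 := by ring
  have e4 : 2 * (1 + k) = 2 * k + 2 := by ring
  have e5 : 1 + k = k + 1 := by ring
  rw [e1, e2, e3, e4, e5]
  simp only [add_comp, sub_comp, mul_comp, pow_comp, X_comp, one_comp, ofNat_comp]
  ring_nf
  simp only [mul_comm k, pow_mul, neg_one_sq, one_pow]
  ring
end

section
/- For every integer h ≥ 6, there is no monic polynomial g ∈ ℤ[X] such that q_h(X) = Φ_5(X) · g(X)², where q_h(t) = t^{4h} − t^{4h−1} + 2t^{3h} + t^{2h} + 2t^{h} − t + 1 and Φ_5 is the 5th cyclotomic polynomial over ℤ. -/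
open Polynomial

theorem stmt_13 (h : ℕ) (hh : 6 ≤ h) :
    ¬ ∃ g : ℤ[X], g.Monic ∧
      (X : ℤ[X]) ^ (4 * h) - X ^ (4 * h - 1) + 2 * X ^ (3 * h) + X ^ (2 * h)
          + 2 * X ^ h - X + 1 = cyclotomic 5 ℤ * g ^ 2 := by
  rintro ⟨g, -, heq⟩
  have hc : cyclotomic 5 ℤ = 1 + X + X^2 + X^3 + X^4 := by
    have : Fact (Nat.Prime 5) := ⟨by norm_num⟩
    rw [cyclotomic_prime]
    simp [Finset.sum_range_succ]
  rw [hc] at heq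
  -- coefficients of the LHS polynomial at n ≤ 5
  have hL : ∀ n : ℕ, n ≤ 5 →
      ((X : ℤ[X]) ^ (4 * h) - X ^ (4 * h - 1) + 2 * X ^ (3 * h) + X ^ (2 * h)
          + 2 * X ^ h - X + 1).coeff n = if n = 0 then 1 else if n = 1 then -1 else 0 := by
    intro n hn
    have e2 : (2 : ℤ[X]) = C 2 := by norm_num
    simp only [e2, coeff_add, coeff_sub, coeff_C_mul, coeff_X_pow, coeff_one, coeff_X]
    have h1 : 4*h ≠ n := by omega
    have h2 : 4*h - 1 ≠ n := by omega
    have h3 : 3*h ≠ n := by omega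
    have h4 : 2*h ≠ n := by omega
    have h5 : h ≠ n := by omega
    simp [if_neg, h1, h2, h3, h4, h5, eq_comm]
    split_ifs <;> omega
  -- coefficients of the RHS polynomial
  have hR : ∀ n : ℕ,
      ((1 + X + X^2 + X^3 + X^4) * g^2).coeff n =
        (g^2).coeff n + (if 1 ≤ n then (g^2).coeff (n-1) else 0)
        + (if 2 ≤ n then (g^2).coeff (n-2) else 0)
        + (if 3 ≤ n then (g^2).coeff (n-3) else 0)
        + (if 4 ≤ n then (g^2).coeff (n-4) else 0) := by
    intro n
    have : ((1 : ℤ[X]) + X + X^2 + X^3 + X^4) * g^2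
        = g^2 + g^2*X^1 + g^2*X^2 + g^2*X^3 + g^2*X^4 := by ring
    rw [this]
    simp only [coeff_add, coeff_mul_X_pow']
  have key : ∀ n : ℕ, n ≤ 5 →
      (if n = 0 then (1:ℤ) else if n = 1 then -1 else 0) =
        (g^2).coeff n + (if 1 ≤ n then (g^2).coeff (n-1) else 0)
        + (if 2 ≤ n then (g^2).coeff (n-2) else 0)
        + (if 3 ≤ n then (g^2).coeff (n-3) else 0)
        + (if 4 ≤ n then (g^2).coeff (n-4) else 0) := by
    intro n hn
    rw [← hL n hn, ← hR n, heq]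
  have E0 := key 0 (by norm_num)
  have E1 := key 1 (by norm_num)
  have E2 := key 2 (by norm_num)
  have E3 := key 3 (by norm_num)
  have E4 := key 4 (by norm_num)
  have E5 := key 5 (by norm_num)
  norm_num at E0 E1 E2 E3 E4 E5
  -- the fifth coefficient of a square is even
  have hpar : ∃ k : ℤ, (g^2).coeff 5 = 2 * k := by
    refine ⟨g.coeff 0 * g.coeff 5 + g.coeff 1 * g.coeff 4 + g.coeff 2 * g.coeff 3, ?_⟩
    rw [sq, coeff_mul, Finset.Nat.sum_antidiagonal_eq_sum_range_succ_mk]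
    simp [Finset.sum_range_succ]
    ring
  obtain ⟨k, hk⟩ := hpar
  omega
end
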